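/- Suppose b₁(0) ≠ 0 and b₁(hω) ≠ 0, so that b₁(hΩ) is invertible. Then for every g : ℝ^d → ℝ^d and every (q,p) ∈ ℝ^d × ℝ^d, the ERKN step (q⁺,p⁺) = Φ_h(q,p) satisfies the identity (in which the nonlinearity g has been eliminated): q⁺ − (cos(hΩ) + h²Ω²·sinc(hΩ)·b̄₁(hΩ)b₁(hΩ)⁻¹)q = h·b̄₁(hΩ)b₁(hΩ)⁻¹·p⁺ + h·(sinc(hΩ) − b̄₁(hΩ)b₁(hΩ)⁻¹cos(hΩ))·p. -/

import Mathlib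

noncomputable section

/-- The (unnormalized) sinc function: `sinc x = sin x / x` for `x ≠ 0`, `sinc 0 = 1`. -/
def rsinc (x : ℝ) : ℝ := if x = 0 then 1 else Real.sin x / x

/-- Real coordinate space `ℝ^d` with the Euclidean norm. -/
abbrev Vec (d : ℕ) : Type := EuclideanSpace ℝ (Fin d)

/-- Block-diagonal scalar operator: multiplies the first `d₁` coordinates by `a`
and the remaining `d₂` coordinates by `b`.  This realizes `f(hΩ)` for
`Ω = diag(0·I_{d₁}, ω·I_{d₂})`, with `a = f 0` and `b = f (hω)`. -/
def bop (d₁ d₂ : ℕ) (a b : ℝ) (v : Vec (d₁ + d₂)) : Vec (d₁ + d₂) :=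
  WithLp.toLp 2 (fun i : Fin (d₁ + d₂) => (if (i : ℕ) < d₁ then a else b) * v i)

/-- One-stage explicit ERKN integrator `Φ_h` for `q'' + Ω²q = g(q)`:
`Q = cos(c₁hΩ)q + c₁h·sinc(c₁hΩ)p`,
`q⁺ = cos(hΩ)q + h·sinc(hΩ)p + h²·b̄₁(hΩ)g(Q)`,
`p⁺ = −hΩ²·sinc(hΩ)q + cos(hΩ)p + h·b₁(hΩ)g(Q)`. -/
def erkn (d₁ d₂ : ℕ) (h ω c₁ : ℝ) (bbar b₁ : ℝ → ℝ)
    (g : Vec (d₁ + d₂) → Vec (d₁ + d₂)) (x : Vec (d₁ + d₂) × Vec (d₁ + d₂)) :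
    Vec (d₁ + d₂) × Vec (d₁ + d₂) :=
  let q := x.1
  let p := x.2
  let Q := bop d₁ d₂ (Real.cos (c₁ * (h * 0))) (Real.cos (c₁ * (h * ω))) q
         + bop d₁ d₂ (c₁ * h * rsinc (c₁ * (h * 0))) (c₁ * h * rsinc (c₁ * (h * ω))) p
  ( bop d₁ d₂ (Real.cos (h * 0)) (Real.cos (h * ω)) q
    + bop d₁ d₂ (h * rsinc (h * 0)) (h * rsinc (h * ω)) p
    + bop d₁ d₂ (h ^ 2 * bbar (h * 0)) (h ^ 2 * bbar (h * ω)) (g Q),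
    bop d₁ d₂ (-(h * 0 ^ 2 * rsinc (h * 0))) (-(h * ω ^ 2 * rsinc (h * ω))) q
    + bop d₁ d₂ (Real.cos (h * 0)) (Real.cos (h * ω)) p
    + bop d₁ d₂ (h * b₁ (h * 0)) (h * b₁ (h * ω)) (g Q) )

lemma bop_apply (d₁ d₂ : ℕ) (a b : ℝ) (v : Vec (d₁ + d₂)) (i : Fin (d₁ + d₂)) :
    bop d₁ d₂ a b v i = (if (i : ℕ) < d₁ then a else b) * v i :=
  rfl

/-- On the eigenspace of `Ω` for the eigenvalue `w` every operator is a scalar, and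
`h b̄ / b` times the `p⁺`-equation has the same `g`-term as the `q⁺`-equation. -/
lemma erkn_block_eliminate {K : Type*} [Field K] {h w C S B b G q p : K} (hb : b ≠ 0) :
    C * q + h * S * p + h ^ 2 * B * G - (C + (h * w) ^ 2 * S * (B / b)) * q
      = h * (B / b) * (-(h * w ^ 2 * S) * q + C * p + h * b * G)
        + h * (S - B / b * C) * p := by
  field_simp
  ring

theorem erkn_eliminate_g_general (d₁ d₂ : ℕ) (h ω : ℝ)
    (c₁ : ℝ) (bbar b₁ : ℝ → ℝ)
    (hb₁₀ : b₁ 0 ≠ 0) (hb₁ω : b₁ (h * ω) ≠ 0)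
    (g : Vec (d₁ + d₂) → Vec (d₁ + d₂)) (q p : Vec (d₁ + d₂)) :
    let x := erkn d₁ d₂ h ω c₁ bbar b₁ g (q, p)
    x.1 - bop d₁ d₂
        (Real.cos (h * 0) + (h * 0) ^ 2 * rsinc (h * 0) * (bbar (h * 0) / b₁ (h * 0)))
        (Real.cos (h * ω) + (h * ω) ^ 2 * rsinc (h * ω) * (bbar (h * ω) / b₁ (h * ω))) q
      = bop d₁ d₂ (h * (bbar (h * 0) / b₁ (h * 0))) (h * (bbar (h * ω) / b₁ (h * ω))) x.2
        + bop d₁ d₂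
            (h * (rsinc (h * 0) - bbar (h * 0) / b₁ (h * 0) * Real.cos (h * 0)))
            (h * (rsinc (h * ω) - bbar (h * ω) / b₁ (h * ω) * Real.cos (h * ω))) p := by
  have hb₁₀' : b₁ (h * 0) ≠ 0 := by rwa [mul_zero]
  ext i
  simp only [erkn, PiLp.sub_apply, PiLp.add_apply, bop_apply]
  split_ifs
  · exact erkn_block_eliminate hb₁₀'
  · exact erkn_block_eliminate hb₁ω

/-- Elimination of the nonlinearity from one ERKN step:
`q⁺ − (cos(hΩ) + h²Ω² sinc(hΩ) b̄₁ b₁⁻¹)q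
  = h b̄₁ b₁⁻¹ p⁺ + h(sinc(hΩ) − b̄₁ b₁⁻¹ cos(hΩ))p`. -/
theorem erkn_eliminate_g (d₁ d₂ : ℕ) (h ω : ℝ) (hh : 0 < h) (hω : 0 < ω)
    (c₁ : ℝ) (hc₁ : c₁ ∈ Set.Icc (0 : ℝ) 1) (bbar b₁ : ℝ → ℝ)
    (hb₁₀ : b₁ 0 ≠ 0) (hb₁ω : b₁ (h * ω) ≠ 0)
    (g : Vec (d₁ + d₂) → Vec (d₁ + d₂)) (q p : Vec (d₁ + d₂)) :
    let x := erkn d₁ d₂ h ω c₁ bbar b₁ g (q, p)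
    x.1 - bop d₁ d₂
        (Real.cos (h * 0) + (h * 0) ^ 2 * rsinc (h * 0) * (bbar (h * 0) / b₁ (h * 0)))
        (Real.cos (h * ω) + (h * ω) ^ 2 * rsinc (h * ω) * (bbar (h * ω) / b₁ (h * ω))) q
      = bop d₁ d₂ (h * (bbar (h * 0) / b₁ (h * 0))) (h * (bbar (h * ω) / b₁ (h * ω))) x.2
        + bop d₁ d₂
            (h * (rsinc (h * 0) - bbar (h * 0) / b₁ (h * 0) * Real.cos (h * 0)))
            (h * (rsinc (h * ω) - bbar (h * ω) / b₁ (h * ω) * Real.cos (h * ω))) p :=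
  erkn_eliminate_g_general d₁ d₂ h ω c₁ bbar b₁ hb₁₀ hb₁ω g q p
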